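/- Let f be monotone submodular with f(∅)=0 on finite V, S ⊆ S' = S ∪ {z} finsets, O a finset, and g ≥ 0 a real. Suppose for every j ∈ O \ S' we have f(S ∪ {j}) − f(S) ≤ g·Γ_j where Γ_j ≥ 0 are reals with Σ_{j ∈ O \ S'} Γ_j ≤ K. Then f(O) ≤ f(S') + g·K. -/
import Mathlib

lemma aux_marginal {V : Type*} [DecidableEq V]
    (f : Finset V → ℝ)
    (hsub : ∀ S T : Finset V, S ⊆ T → ∀ e ∉ T,
      f (T ∪ {e}) - f T ≤ f (S ∪ {e}) - f S)
    (S T : Finset V) (hST : S ⊆ T) :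
    ∀ A : Finset V, Disjoint A T →
      f (T ∪ A) ≤ f T + ∑ j ∈ A, (f (S ∪ {j}) - f S) := by
  intro A
  induction A using Finset.induction_on with
  | empty => simp
  | @insert a A' ha ih =>
    intro hdisj
    have hdisj' : Disjoint A' T := by
      exact Disjoint.mono_left (Finset.subset_insert a A') hdisj
    have haT : a ∉ T := by
      have := Finset.disjoint_left.mp hdisj (Finset.mem_insert_self a A')
      exact this
    have haTA : a ∉ T ∪ A' := by
      simp [haT, ha]
    have h1 : f ((T ∪ A') ∪ {a}) - f (T ∪ A') ≤ f (S ∪ {a}) - f S :=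
      hsub S (T ∪ A') (hST.trans Finset.subset_union_left) a haTA
    have h2 := ih hdisj'
    have heq : T ∪ insert a A' = (T ∪ A') ∪ {a} := by
      ext x; simp [or_comm, or_assoc, or_left_comm]
    rw [heq, Finset.sum_insert ha]
    linarith

/-- Abstract form of Lemma 2 (greedy+Max performance lemma). -/
theorem greedy_plus_max_lemma {V : Type*} [Fintype V] [DecidableEq V]
    (f : Finset V → ℝ) (hempty : f ∅ = 0)
    (hmono : ∀ S T : Finset V, S ⊆ T → f S ≤ f T)
    (hsub : ∀ S T : Finset V, S ⊆ T → ∀ e ∉ T,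
      f (T ∪ {e}) - f T ≤ f (S ∪ {e}) - f S)
    (S O : Finset V) (z : V) (g K : ℝ) (hg : 0 ≤ g)
    (Γ : V → ℝ) (hΓ : ∀ j : V, 0 ≤ Γ j)
    (hgain : ∀ j ∈ O \ (S ∪ {z}), f (S ∪ {j}) - f S ≤ g * Γ j)
    (hK : ∑ j ∈ O \ (S ∪ {z}), Γ j ≤ K) :
    f O ≤ f (S ∪ {z}) + g * K := by
  set S' := S ∪ {z} with hS'
  set A := O \ S' with hA
  have hdisj : Disjoint A S' := Finset.sdiff_disjoint
  have h1 : f O ≤ f (S' ∪ A) :=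
    hmono _ _ (by intro x hx; simp [hA, hS']; tauto)
  have h2 : f (S' ∪ A) ≤ f S' + ∑ j ∈ A, (f (S ∪ {j}) - f S) :=
    aux_marginal f hsub S S' Finset.subset_union_left A hdisj
  have h3 : ∑ j ∈ A, (f (S ∪ {j}) - f S) ≤ ∑ j ∈ A, g * Γ j :=
    Finset.sum_le_sum (fun j hj => hgain j hj)
  have h4 : ∑ j ∈ A, g * Γ j = g * ∑ j ∈ A, Γ j := by
    rw [Finset.mul_sum]
  have h5 : g * ∑ j ∈ A, Γ j ≤ g * K := by
    apply mul_le_mul_of_nonneg_left hK hg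
  linarith
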